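/- Let $\Lambda = \mathbb{Z}/N\mathbb{Z}$ with $N$ odd, $T X = \{1\}\triangle(X+1)$, and let $w_N$ be as above (minimum size of a connected bond set covering $X$ and intersecting bond $\langle N,1\rangle$). Then for any $X \subseteq \Lambda$ and any integer $s$, $w_N(T^s X) \le w_N(X) + w_N(T^s\emptyset)$. -/

import Mathlib

open scoped Classical symmDiff

/-- Bonds of the cyclic lattice are indexed by their left endpoint: `j` stands for `⟨j, j+1⟩`.
Two bonds are connected iff they share an endpoint or are at distance 1. -/
def bondAdj (N : ℕ) (p q : ZMod N) : Prop :=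
  q = p ∨ q = p + 1 ∨ q = p + 2 ∨ p = q + 1 ∨ p = q + 2

/-- A set of bonds is connected if any two of its bonds are joined by a chain of
pairwise-connected bonds inside the set. -/
def connectedIn (N : ℕ) (C : Finset (ZMod N)) : Prop :=
  ∀ p ∈ C, ∀ q ∈ C, Relation.ReflTransGen (fun a b => a ∈ C ∧ b ∈ C ∧ bondAdj N a b) p q

/-- `C` covers `X`: every site of `X` is an endpoint of some bond of `C`. -/
def covers (N : ℕ) (C : Finset (ZMod N)) (X : Finset (ZMod N)) : Prop :=
  ∀ x ∈ X, ∃ j ∈ C, x = j ∨ x = j + 1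

/-- `C` intersects the bond `⟨N, 1⟩` (site `N` is `0` in `ZMod N`). -/
def touches (N : ℕ) (C : Finset (ZMod N)) : Prop :=
  ∃ j ∈ C, j = 0 ∨ j + 1 = 0 ∨ j = 1 ∨ j + 1 = 1

/-- `w_N(X)`: minimal cardinality of a connected bond set covering `X` and
intersecting the bond `⟨N,1⟩`. -/
noncomputable def wN (N : ℕ) (X : Finset (ZMod N)) : ℕ∞ :=
  sInf {c : ℕ∞ | ∃ C : Finset (ZMod N),
    connectedIn N C ∧ covers N C X ∧ touches N C ∧ (C.card : ℕ∞) = c}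

/-- `j : X` : the bond `⟨j, j+1⟩` has exactly one endpoint in `X`. -/
def bdry (N : ℕ) (X : Finset (ZMod N)) (j : ZMod N) : Prop :=
  (j ∈ X ∧ j + 1 ∉ X) ∨ (j + 1 ∈ X ∧ j ∉ X)

/-- `j :: X` : for `j ≠ N` this means `j : X`; for `j = N` (i.e. `j = 0`) it means
both or neither of `N, 1` lie in `X`. -/
def dbdry (N : ℕ) (X : Finset (ZMod N)) (j : ZMod N) : Prop :=
  if j = 0 then ¬ bdry N X j else bdry N X j

/-- The generalized translation `T X = {1} ∆ (X + 1)`. -/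
noncomputable def T (N : ℕ) (X : Finset (ZMod N)) : Finset (ZMod N) :=
  ({1} : Finset (ZMod N)) ∆ (X.image (· + 1))

/-!
Write `T^s X = (X + s) ∆ T^s ∅` and take optimal bond sets `C` for `X` and `D` for `T^s ∅`.
The translate `C + s` meets the bond `⟨s, s+1⟩`, since `C` touches `⟨N, 1⟩`. So does `D`: as
`s :: T^s ∅`, for `s ≠ 0` one endpoint of `⟨s, s+1⟩` lies in `T^s ∅` and is covered by `D`,
while for `s = 0` this is the condition that `D` touches `⟨N, 1⟩`. Hence `(C + s) ∪ D` is
connected, covers `(X + s) ∪ T^s ∅ ⊇ T^s X`, touches `⟨N, 1⟩` and has at most `|C| + |D|` bonds.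
-/

lemma Finset.mem_image_add_right_iff {G : Type*} [AddGroup G] [DecidableEq G]
    (s : Finset G) (a x : G) : x ∈ s.image (· + a) ↔ x - a ∈ s := by
  constructor
  · intro h
    obtain ⟨y, hy, rfl⟩ := Finset.mem_image.1 h
    simpa using hy
  · exact fun h => Finset.mem_image.2 ⟨x - a, h, sub_add_cancel x a⟩

section Translation

variable {N : ℕ}

lemma mem_T_iff (X : Finset (ZMod N)) (x : ZMod N) :
    x ∈ T N X ↔ Xor (x = 1) (x - 1 ∈ X) := by
  simp only [T, Finset.mem_symmDiff, Finset.mem_singleton, Finset.mem_image_add_right_iff, Xor]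

lemma T_iterate_eq (X : Finset (ZMod N)) (s : ℕ) :
    (T N)^[s] X = X.image (· + (s : ZMod N)) ∆ (T N)^[s] ∅ := by
  ext x
  rw [Finset.mem_symmDiff, Finset.mem_image_add_right_iff]
  induction s generalizing x with
  | zero => simp
  | succ n ih =>
    have hsub : x - 1 - n = x - ((n + 1 : ℕ) : ZMod N) := by push_cast; ring
    simp only [Function.iterate_succ_apply', mem_T_iff, ih (x - 1), hsub, Xor]
    tauto

lemma bdry_T_iff (Y : Finset (ZMod N)) (j : ZMod N) :
    bdry N (T N Y) (j + 1) ↔ Xor (Xor (j = 0) (j + 1 = 0)) (bdry N Y j) := by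
  simp only [bdry, mem_T_iff, add_sub_cancel_right, add_eq_right, Xor]
  tauto

lemma dbdry_T_iterate_empty (s : ℕ) : dbdry N ((T N)^[s] ∅) s := by
  induction s with
  | zero => simp [dbdry, bdry]
  | succ n ih =>
    unfold dbdry at ih ⊢
    rw [Function.iterate_succ_apply', Nat.cast_succ, bdry_T_iff]
    split_ifs at ih ⊢ <;> simp_all [Xor]

end Translation

section Bonds

variable {N : ℕ}

lemma bondAdj_symm {p q : ZMod N} (h : bondAdj N p q) : bondAdj N q p := by
  unfold bondAdj at *
  tauto

lemma bondAdj_add_right_iff (p q t : ZMod N) : bondAdj N (p + t) (q + t) ↔ bondAdj N p q := by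
  simp only [bondAdj, add_right_comm _ t, add_left_inj]

/-- `C` contains a bond sharing an endpoint with the bond `⟨t, t+1⟩`. -/
def meets (N : ℕ) (C : Finset (ZMod N)) (t : ZMod N) : Prop :=
  ∃ j ∈ C, j = t - 1 ∨ j = t ∨ j = t + 1

lemma bondAdj_of_near {t a b : ZMod N}
    (ha : a = t - 1 ∨ a = t ∨ a = t + 1) (hb : b = t - 1 ∨ b = t ∨ b = t + 1) :
    bondAdj N a b := by
  unfold bondAdj
  rcases ha with rfl | rfl | rfl <;> rcases hb with rfl | rfl | rfl <;>
    first
      | (left; ring1)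
      | (right; left; ring1)
      | (right; right; left; ring1)
      | (right; right; right; left; ring1)
      | (right; right; right; right; ring1)

lemma meets.exists_bondAdj {C D : Finset (ZMod N)} {t : ZMod N} (hC : meets N C t)
    (hD : meets N D t) : ∃ a ∈ C, ∃ b ∈ D, bondAdj N a b := by
  obtain ⟨a, ha, hat⟩ := hC
  obtain ⟨b, hb, hbt⟩ := hD
  exact ⟨a, ha, b, hb, bondAdj_of_near hat hbt⟩

lemma meets.image_add_right {C : Finset (ZMod N)} {t : ZMod N} (h : meets N C t) (u : ZMod N) :
    meets N (C.image (· + u)) (t + u) := by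
  obtain ⟨j, hj, hjt⟩ := h
  refine ⟨j + u, Finset.mem_image_of_mem _ hj, ?_⟩
  rcases hjt with rfl | rfl | rfl
  · exact Or.inl (by ring)
  · exact Or.inr (Or.inl rfl)
  · exact Or.inr (Or.inr (by ring))

lemma touches.meets_zero {C : Finset (ZMod N)} (h : touches N C) : meets N C 0 := by
  obtain ⟨j, hj, hj0⟩ := h
  refine ⟨j, hj, ?_⟩
  rcases hj0 with h | h | h | h
  · exact Or.inr (Or.inl h)
  · exact Or.inl (by linear_combination h)
  · exact Or.inr (Or.inr (by rw [h, zero_add]))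
  · exact Or.inr (Or.inl (by linear_combination h))

lemma meets_of_dbdry {C Y : Finset (ZMod N)} {t : ZMod N} (hcov : covers N C Y)
    (htouch : touches N C) (ht : dbdry N Y t) : meets N C t := by
  unfold dbdry at ht
  split_ifs at ht with h0
  · exact h0 ▸ htouch.meets_zero
  · have hmem : t ∈ Y ∨ t + 1 ∈ Y := by unfold bdry at ht; tauto
    rcases hmem with hm | hm
    · obtain ⟨j, hj, h | h⟩ := hcov t hm
      · exact ⟨j, hj, Or.inr (Or.inl h.symm)⟩
      · exact ⟨j, hj, Or.inl (by rw [h, add_sub_cancel_right])⟩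
    · obtain ⟨j, hj, hjt⟩ := hcov (t + 1) hm
      refine ⟨j, hj, ?_⟩
      rcases hjt with h | h
      · exact Or.inr (Or.inr h.symm)
      · exact Or.inr (Or.inl (add_right_cancel h).symm)

lemma covers.mono {C X X' : Finset (ZMod N)} (h : covers N C X) (hX' : X' ⊆ X) :
    covers N C X' :=
  fun x hx => h x (hX' hx)

lemma covers_union {C D X Y : Finset (ZMod N)} (hX : covers N C X) (hY : covers N D Y) :
    covers N (C ∪ D) (X ∪ Y) := by
  intro x hx
  rcases Finset.mem_union.1 hx with hx | hx
  · obtain ⟨j, hj, hjx⟩ := hX x hx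
    exact ⟨j, Finset.mem_union_left _ hj, hjx⟩
  · obtain ⟨j, hj, hjx⟩ := hY x hx
    exact ⟨j, Finset.mem_union_right _ hj, hjx⟩

lemma covers.image_add_right {C X : Finset (ZMod N)} (h : covers N C X) (t : ZMod N) :
    covers N (C.image (· + t)) (X.image (· + t)) := by
  intro x hx
  obtain ⟨y, hy, rfl⟩ := Finset.mem_image.1 hx
  obtain ⟨j, hj, hjy⟩ := h y hy
  refine ⟨j + t, Finset.mem_image_of_mem _ hj, ?_⟩
  rcases hjy with rfl | rfl
  · exact Or.inl rfl
  · exact Or.inr (add_right_comm _ _ _)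

lemma touches.union_left {D : Finset (ZMod N)} (h : touches N D) (C : Finset (ZMod N)) :
    touches N (C ∪ D) := by
  obtain ⟨j, hj, hj0⟩ := h
  exact ⟨j, Finset.mem_union_right _ hj, hj0⟩

lemma connectedIn.image_add_right {C : Finset (ZMod N)} (h : connectedIn N C) (t : ZMod N) :
    connectedIn N (C.image (· + t)) := by
  intro p' hp' q' hq'
  obtain ⟨p, hp, rfl⟩ := Finset.mem_image.1 hp'
  obtain ⟨q, hq, rfl⟩ := Finset.mem_image.1 hq'
  refine (h p hp q hq).lift (· + t) ?_
  rintro a b ⟨ha, hb, hab⟩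
  exact ⟨Finset.mem_image_of_mem _ ha, Finset.mem_image_of_mem _ hb,
    (bondAdj_add_right_iff a b t).2 hab⟩

lemma connectedIn.chain_of_subset {C C' : Finset (ZMod N)} (h : connectedIn N C) (hC : C ⊆ C')
    {p q : ZMod N} (hp : p ∈ C) (hq : q ∈ C) :
    Relation.ReflTransGen (fun a b => a ∈ C' ∧ b ∈ C' ∧ bondAdj N a b) p q :=
  Relation.ReflTransGen.mono (fun _ _ ⟨ha, hb, hab⟩ => ⟨hC ha, hC hb, hab⟩) _ _ (h p hp q hq)

/-- Every bond of `C ∪ D` is joined to `a` in both directions, through `b` if it lies in `D`. -/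
lemma connectedIn_union {C D : Finset (ZMod N)} (hC : connectedIn N C) (hD : connectedIn N D)
    {a b : ZMod N} (ha : a ∈ C) (hb : b ∈ D) (hab : bondAdj N a b) : connectedIn N (C ∪ D) := by
  have haU : a ∈ C ∪ D := Finset.mem_union_left _ ha
  have hbU : b ∈ C ∪ D := Finset.mem_union_right _ hb
  have hub : ∀ x ∈ C ∪ D,
      Relation.ReflTransGen (fun a b => a ∈ C ∪ D ∧ b ∈ C ∪ D ∧ bondAdj N a b) x a ∧
      Relation.ReflTransGen (fun a b => a ∈ C ∪ D ∧ b ∈ C ∪ D ∧ bondAdj N a b) a x := by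
    intro x hx
    rcases Finset.mem_union.1 hx with hx | hx
    · exact ⟨hC.chain_of_subset Finset.subset_union_left hx ha,
        hC.chain_of_subset Finset.subset_union_left ha hx⟩
    · exact ⟨(hD.chain_of_subset Finset.subset_union_right hx hb).tail ⟨hbU, haU, bondAdj_symm hab⟩,
        (Relation.ReflTransGen.single ⟨haU, hbU, hab⟩).trans
          (hD.chain_of_subset Finset.subset_union_right hb hx)⟩
  intro p hp q hq
  exact (hub p hp).1.trans (hub q hq).2

end Bonds

section Weight

variable {N : ℕ}

lemma wN_le_card {C X : Finset (ZMod N)} (hconn : connectedIn N C) (hcov : covers N C X)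
    (htouch : touches N C) : wN N X ≤ C.card :=
  sInf_le ⟨C, hconn, hcov, htouch, rfl⟩

lemma exists_card_eq_wN {X : Finset (ZMod N)} (h : wN N X ≠ ⊤) :
    ∃ C, connectedIn N C ∧ covers N C X ∧ touches N C ∧ (C.card : ℕ∞) = wN N X := by
  have hne : {c : ℕ∞ | ∃ C : Finset (ZMod N),
      connectedIn N C ∧ covers N C X ∧ touches N C ∧ (C.card : ℕ∞) = c}.Nonempty := by
    by_contra hempty
    exact h (by rw [wN, Set.not_nonempty_iff_eq_empty.1 hempty, sInf_empty])
  exact csInf_mem hne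

theorem wN_image_add_symmDiff_le (X Y : Finset (ZMod N)) {t : ZMod N} (ht : dbdry N Y t) :
    wN N (X.image (· + t) ∆ Y) ≤ wN N X + wN N Y := by
  rcases eq_or_ne (wN N X) ⊤ with hX | hX
  · simp [hX]
  rcases eq_or_ne (wN N Y) ⊤ with hY | hY
  · simp [hY]
  obtain ⟨C, hCconn, hCcov, hCtouch, hCcard⟩ := exists_card_eq_wN hX
  obtain ⟨D, hDconn, hDcov, hDtouch, hDcard⟩ := exists_card_eq_wN hY
  have hCmeets : meets N (C.image (· + t)) t := by
    simpa using hCtouch.meets_zero.image_add_right t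
  obtain ⟨a, ha, b, hb, hab⟩ := hCmeets.exists_bondAdj (meets_of_dbdry hDcov hDtouch ht)
  calc wN N (X.image (· + t) ∆ Y) ≤ (C.image (· + t) ∪ D).card :=
        wN_le_card (connectedIn_union (hCconn.image_add_right t) hDconn ha hb hab)
          ((covers_union (hCcov.image_add_right t) hDcov).mono Finset.symmDiff_subset_union)
          (hDtouch.union_left _)
    _ ≤ C.card + D.card := by
        exact_mod_cast (Finset.card_union_le _ _).trans
          (Nat.add_le_add_right Finset.card_image_le _)
    _ = wN N X + wN N Y := by rw [hCcard, hDcard]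

end Weight

theorem stmt_8_general (N : ℕ) (X : Finset (ZMod N)) (s : ℕ) :
    wN N ((T N)^[s] X) ≤ wN N X + wN N ((T N)^[s] ∅) := by
  rw [T_iterate_eq X s]
  exact wN_image_add_symmDiff_le X _ (dbdry_T_iterate_empty s)

theorem stmt_8 (N : ℕ) [NeZero N] (hN : Odd N) (X : Finset (ZMod N)) (s : ℕ) :
    wN N ((T N)^[s] X) ≤ wN N X + wN N ((T N)^[s] ∅) :=
  stmt_8_general N X s
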